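/- arXiv:1504.06765 — 4 statements merged into one kernel-verified Lean document; each statement's English description precedes it below -/
import Mathlib

section
/- Single-interval error representation. Let a < b be real numbers, let u, U, z : [a,b] → ℝ^N be continuously differentiable, let f : ℝ^N × [a,b] → ℝ^N be continuous, and let Ā : [a,b] → ℝ^{N×N} be a continuous matrix-valued function satisfying Ā(t)(U(t) − u(t)) = f(U(t), t) − f(u(t), t) for all t ∈ [a,b]. Assume u̇(t) = f(u(t), t) and −ż(t) = Ā(t)ᵀ z(t) on [a,b]. Then, with e = U − u and R(t) = U̇(t) − f(U(t), t), one has ⟨z(b), e(b)⟩ − ⟨z(a), e(a)⟩ = ∫ₐᵇ ⟨z(t), R(t)⟩ dt. -/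
open MeasureTheory Matrix
open scoped InnerProductSpace

/-!
Along the dual solution `z`, the pairing `t ↦ ⟪z t, e t⟫` with the error `e = U - u` has
derivative `⟪z, ė⟫ + ⟪ż, e⟫ = ⟪z, U̇ - f(u)⟫ - ⟪z, Ā e⟫ = ⟪z, U̇ - f(U)⟫ = ⟪z, R⟫`, because `Āᵀ`
is the adjoint of `Ā` and `Ā e = f(U) - f(u)`. The fundamental theorem of calculus on `[a, b]`
finishes the proof.
-/

theorem EuclideanSpace.inner_eq_of_transpose_mulVec {n : Type*} [Fintype n]
    {M : Matrix n n ℝ} {x w y r : EuclideanSpace ℝ n}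
    (hw : w.ofLp = Mᵀ *ᵥ x.ofLp) (hr : M *ᵥ y.ofLp = r.ofLp) :
    ⟪w, y⟫_ℝ = ⟪x, r⟫_ℝ := by
  simp only [EuclideanSpace.inner_eq_star_dotProduct, star_trivial, hw, ← hr,
    mulVec_transpose]
  rw [dotProduct_comm, ← dotProduct_mulVec, dotProduct_comm]

theorem intervalIntegral.integral_eq_sub_of_hasDerivWithinAt_Icc {E : Type*}
    [NormedAddCommGroup E] [NormedSpace ℝ E] [CompleteSpace E] {g g' : ℝ → E} {a b : ℝ}
    (hab : a ≤ b) (hderiv : ∀ t ∈ Set.Icc a b, HasDerivWithinAt g (g' t) (Set.Icc a b) t)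
    (hg' : ContinuousOn g' (Set.Icc a b)) :
    ∫ t in a..b, g' t = g b - g a :=
  integral_eq_sub_of_hasDeriv_right_of_le hab
    (fun t ht => (hderiv t ht).continuousWithinAt)
    (fun t ht => ((hderiv t (Set.Ioo_subset_Icc_self ht)).hasDerivAt
      (Icc_mem_nhds ht.1 ht.2)).hasDerivWithinAt)
    (hg'.intervalIntegrable_of_Icc hab)

theorem hasDerivWithinAt_inner_dual_error {n : Type*} [Fintype n]
    {u U z : ℝ → EuclideanSpace ℝ n} {U' z' fu fU : EuclideanSpace ℝ n}
    {M : Matrix n n ℝ} {s : Set ℝ} {t : ℝ}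
    (hu : HasDerivWithinAt u fu s t) (hU : HasDerivWithinAt U U' s t)
    (hz : HasDerivWithinAt z z' s t)
    (hM : M *ᵥ (U t - u t).ofLp = (fU - fu).ofLp)
    (hdual : z'.ofLp = -(Mᵀ *ᵥ (z t).ofLp)) :
    HasDerivWithinAt (fun s => ⟪z s, U s - u s⟫_ℝ) ⟪z t, U' - fU⟫_ℝ s t := by
  have hadj : ⟪-z', U t - u t⟫_ℝ = ⟪z t, fU - fu⟫_ℝ :=
    EuclideanSpace.inner_eq_of_transpose_mulVec (by rw [WithLp.ofLp_neg, hdual, neg_neg]) hM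
  refine (hz.inner ℝ (hU.sub hu)).congr_deriv ?_
  calc ⟪z t, U' - fu⟫_ℝ + ⟪z', (U - u) t⟫_ℝ = ⟪z t, U' - fu⟫_ℝ - ⟪z t, fU - fu⟫_ℝ := by
        rw [Pi.sub_apply, ← hadj, inner_neg_left, sub_neg_eq_add]
    _ = ⟪z t, U' - fU⟫_ℝ := by rw [← inner_sub_right, sub_sub_sub_cancel_right]

theorem single_interval_error_representation_general (N : ℕ) (a b : ℝ) (hab : a < b)
    (u U z u' U' z' : ℝ → EuclideanSpace ℝ (Fin N))
    (f : EuclideanSpace ℝ (Fin N) → ℝ → EuclideanSpace ℝ (Fin N))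
    (A : ℝ → Matrix (Fin N) (Fin N) ℝ)
    (hf : Continuous fun q : EuclideanSpace ℝ (Fin N) × ℝ => f q.1 q.2)
    (hu : ∀ t ∈ Set.Icc a b, HasDerivWithinAt u (u' t) (Set.Icc a b) t)
    (hU : ∀ t ∈ Set.Icc a b, HasDerivWithinAt U (U' t) (Set.Icc a b) t)
    (hz : ∀ t ∈ Set.Icc a b, HasDerivWithinAt z (z' t) (Set.Icc a b) t)
    (hU'c : ContinuousOn U' (Set.Icc a b))
    (hAavg : ∀ t ∈ Set.Icc a b, (A t).mulVec (U t - u t) = f (U t) t - f (u t) t)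
    (hode : ∀ t ∈ Set.Icc a b, u' t = f (u t) t)
    (hdual : ∀ t ∈ Set.Icc a b, z' t = -(Matrix.mulVec (A t)ᵀ (z t))) :
    ⟪z b, U b - u b⟫_ℝ - ⟪z a, U a - u a⟫_ℝ
      = ∫ t in a..b, ⟪z t, U' t - f (U t) t⟫_ℝ := by
  have hzc : ContinuousOn z (Set.Icc a b) := fun t ht => (hz t ht).continuousWithinAt
  have hUc : ContinuousOn U (Set.Icc a b) := fun t ht => (hU t ht).continuousWithinAt
  have hR : ContinuousOn (fun t => ⟪z t, U' t - f (U t) t⟫_ℝ) (Set.Icc a b) :=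
    hzc.inner (hU'c.sub (hf.comp_continuousOn (hUc.prodMk continuousOn_id)))
  refine (intervalIntegral.integral_eq_sub_of_hasDerivWithinAt_Icc
    (g := fun t => ⟪z t, U t - u t⟫_ℝ) hab.le (fun t ht => ?_) hR).symm
  exact hasDerivWithinAt_inner_dual_error (hode t ht ▸ hu t ht) (hU t ht) (hz t ht)
    (hAavg t ht) (hdual t ht)

/-- **Single-interval error representation.**
If `u̇ = f(u,t)`, `−ż = Ā(t)ᵀ z` and `Ā(t)(U(t) − u(t)) = f(U(t),t) − f(u(t),t)` on `[a,b]`,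
with `u, U, z` continuously differentiable, then with `e = U − u` and
`R(t) = U̇(t) − f(U(t),t)` one has `⟨z(b), e(b)⟩ − ⟨z(a), e(a)⟩ = ∫ₐᵇ ⟨z(t), R(t)⟩ dt`. -/
theorem single_interval_error_representation (N : ℕ) (a b : ℝ) (hab : a < b)
    (u U z u' U' z' : ℝ → EuclideanSpace ℝ (Fin N))
    (f : EuclideanSpace ℝ (Fin N) → ℝ → EuclideanSpace ℝ (Fin N))
    (A : ℝ → Matrix (Fin N) (Fin N) ℝ)
    (hf : Continuous fun q : EuclideanSpace ℝ (Fin N) × ℝ => f q.1 q.2)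
    (hA : ContinuousOn A (Set.Icc a b))
    (hu : ∀ t ∈ Set.Icc a b, HasDerivWithinAt u (u' t) (Set.Icc a b) t)
    (hU : ∀ t ∈ Set.Icc a b, HasDerivWithinAt U (U' t) (Set.Icc a b) t)
    (hz : ∀ t ∈ Set.Icc a b, HasDerivWithinAt z (z' t) (Set.Icc a b) t)
    (hu'c : ContinuousOn u' (Set.Icc a b))
    (hU'c : ContinuousOn U' (Set.Icc a b))
    (hz'c : ContinuousOn z' (Set.Icc a b))
    (hAavg : ∀ t ∈ Set.Icc a b, (A t).mulVec (U t - u t) = f (U t) t - f (u t) t)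
    (hode : ∀ t ∈ Set.Icc a b, u' t = f (u t) t)
    (hdual : ∀ t ∈ Set.Icc a b, z' t = -(Matrix.mulVec (A t)ᵀ (z t))) :
    ⟪z b, U b - u b⟫_ℝ - ⟪z a, U a - u a⟫_ℝ
      = ∫ t in a..b, ⟪z t, U' t - f (U t) t⟫_ℝ :=
  single_interval_error_representation_general N a b hab u U z u' U' z' f A hf hu hU hz hU'c hAavg
    hode hdual
end

section
/- Error representation (Theorem 1). Under the assumptions below, the error U(T) − u(T) satisfies ⟨z_T, U(T) − u(T)⟩ = ⟨z(0), U(0) − u(0)⟩ + Σ_{m=1}^{M} ⟨z(t_{m−1}), [U]_{m−1}⟩ + ∫₀ᵀ ⟨z(t), R(t)⟩ dt, where R(t) = U̇(t) − f(U(t), t) on each open subinterval and [U]_{m−1} = U(t_{m−1}⁺) − U(t_{m−1}) is the jump of U at t_{m−1}. -/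
open MeasureTheory Matrix Set
open scoped InnerProductSpace

/-
The dual solution turns the error into a quantity whose derivative is the residual: on each
subinterval, `d/dt ⟪z, U - u⟫ = ⟪ż, U - u⟫ + ⟪z, U̇ - f(u)⟫ = -⟪z, Ā(U - u)⟫ + ⟪z, U̇ - f(u)⟫
= ⟪z, U̇ - f(U)⟫`, because `Ā` linearises `f` exactly between `u` and `U`. Integrating over
`(t_{m-1}, t_m]` and summing, the boundary terms telescope up to the jumps of `U`.
-/

theorem monotoneOn_Iic_of_le_succ {α : Type*} [Preorder α] {t : ℕ → α} {M : ℕ}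
    (ht : ∀ m < M, t m ≤ t (m + 1)) : MonotoneOn t (Iic M) := by
  intro a _ b hb hab
  induction b, hab using Nat.le_induction with
  | base => exact le_rfl
  | succ n _ ih => exact (ih (Nat.le_of_succ_le hb)).trans (ht n hb)

theorem inner_eq_neg_inner_of_eq_neg_transpose_mulVec {ι : Type*} [Fintype ι]
    (A : Matrix ι ι ℝ) {x w y v : EuclideanSpace ℝ ι}
    (hx : x.ofLp = -(Aᵀ *ᵥ w.ofLp)) (hv : A *ᵥ y.ofLp = v.ofLp) : ⟪x, y⟫_ℝ = -⟪w, v⟫_ℝ := by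
  simp only [EuclideanSpace.inner_eq_star_dotProduct, star_trivial, hx, ← hv,
    dotProduct_neg, dotProduct_mulVec, mulVec_transpose, dotProduct_comm]

theorem integral_inner_deriv_add_inner_deriv_eq_sub {E : Type*} [NormedAddCommGroup E]
    [InnerProductSpace ℝ E] {a b : ℝ} (hab : a ≤ b) {f g f' g' : ℝ → E}
    (hf : ∀ x ∈ Icc a b, HasDerivWithinAt f (f' x) (Icc a b) x) (hf' : ContinuousOn f' (Icc a b))
    (hg : ∀ x ∈ Icc a b, HasDerivWithinAt g (g' x) (Icc a b) x) (hg' : ContinuousOn g' (Icc a b)) :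
    ∫ x in a..b, (⟪f' x, g x⟫_ℝ + ⟪f x, g' x⟫_ℝ) = ⟪f b, g b⟫_ℝ - ⟪f a, g a⟫_ℝ := by
  have hfc : ContinuousOn f (Icc a b) := fun x hx => (hf x hx).continuousWithinAt
  have hgc : ContinuousOn g (Icc a b) := fun x hx => (hg x hx).continuousWithinAt
  have hderiv_cont : ContinuousOn (fun x => ⟪f' x, g x⟫_ℝ + ⟪f x, g' x⟫_ℝ) (Icc a b) :=
    (hf'.inner hgc).add (hfc.inner hg')
  refine intervalIntegral.integral_eq_sub_of_hasDerivAt_of_le hab (hfc.inner hgc)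
    (fun x hx => ?_) (hderiv_cont.intervalIntegrable_of_Icc hab)
  have hIcc : Icc a b ∈ nhds x := Icc_mem_nhds hx.1 hx.2
  rw [add_comm]
  exact ((hf x (Ioo_subset_Icc_self hx)).hasDerivAt hIcc).inner ℝ
    ((hg x (Ioo_subset_Icc_self hx)).hasDerivAt hIcc)

theorem integral_inner_residual_eq {ι : Type*} [Fintype ι] {a b : ℝ} (hab : a < b)
    {u U V z u' V' z' : ℝ → EuclideanSpace ℝ ι} {f : EuclideanSpace ℝ ι → ℝ → EuclideanSpace ℝ ι}
    {A : ℝ → Matrix ι ι ℝ}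
    (hAavg : ∀ s ∈ Ioo a b, A s *ᵥ (U s - u s) = f (U s) s - f (u s) s)
    (hu : ∀ s ∈ Icc a b, HasDerivWithinAt u (u' s) (Icc a b) s) (hu'c : ContinuousOn u' (Icc a b))
    (hode : ∀ s ∈ Ioo a b, u' s = f (u s) s)
    (hVU : ∀ s ∈ Ioc a b, V s = U s)
    (hV : ∀ s ∈ Icc a b, HasDerivWithinAt V (V' s) (Icc a b) s) (hV'c : ContinuousOn V' (Icc a b))
    (hz : ∀ s ∈ Icc a b, HasDerivWithinAt z (z' s) (Icc a b) s) (hz'c : ContinuousOn z' (Icc a b))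
    (hdual : ∀ s ∈ Ioo a b, z' s = -((A s)ᵀ *ᵥ z s)) :
    ∫ s in a..b, ⟪z s, V' s - f (U s) s⟫_ℝ = ⟪z b, U b - u b⟫_ℝ - ⟪z a, V a - u a⟫_ℝ := by
  have hprod := integral_inner_deriv_add_inner_deriv_eq_sub hab.le hz hz'c
    (fun s hs => (hV s hs).sub (hu s hs)) (hV'c.sub hu'c)
  simp only [Pi.sub_apply, hVU b (right_mem_Ioc.mpr hab)] at hprod
  rw [← hprod]
  refine intervalIntegral.integral_congr_Ioo_of_le hab.le fun s hs => ?_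
  have hdiff : ⟪z' s, U s - u s⟫_ℝ = -⟪z s, f (U s) s - f (u s) s⟫_ℝ :=
    inner_eq_neg_inner_of_eq_neg_transpose_mulVec (A s) (hdual s hs) (hAavg s hs)
  rw [hVU s (Ioo_subset_Ioc_self hs), hdiff, hode s hs]
  simp only [inner_sub_right]
  ring

theorem error_representation_general (N M : ℕ) (T : ℝ)
    (t : ℕ → ℝ) (ht0 : t 0 = 0) (htM : t M = T) (htlt : ∀ m < M, t m < t (m + 1))
    (u U z u' z' : ℝ → EuclideanSpace ℝ (Fin N))
    (Um Um' : ℕ → ℝ → EuclideanSpace ℝ (Fin N))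
    (f : EuclideanSpace ℝ (Fin N) → ℝ → EuclideanSpace ℝ (Fin N))
    (A : ℝ → Matrix (Fin N) (Fin N) ℝ)
    (zT : EuclideanSpace ℝ (Fin N))
    -- Ā is continuous and satisfies the averaged-Jacobian property
    (hAavg : ∀ s ∈ Set.Icc 0 T, (A s).mulVec (U s - u s) = f (U s) s - f (u s) s)
    -- u is a continuously differentiable solution of the ODE
    (hu : ∀ s ∈ Set.Icc 0 T, HasDerivWithinAt u (u' s) (Set.Icc 0 T) s)
    (hu'c : ContinuousOn u' (Set.Icc 0 T))
    (hode : ∀ s ∈ Set.Ioc 0 T, u' s = f (u s) s)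
    -- U is piecewise smooth: on `(t m, t (m+1)]` it agrees with the C¹ function `Um m`
    (hUpw : ∀ m < M, ∀ s ∈ Set.Ioc (t m) (t (m + 1)), Um m s = U s)
    (hUm : ∀ m < M, ∀ s ∈ Set.Icc (t m) (t (m + 1)),
      HasDerivWithinAt (Um m) (Um' m s) (Set.Icc (t m) (t (m + 1))) s)
    (hUm'c : ∀ m < M, ContinuousOn (Um' m) (Set.Icc (t m) (t (m + 1))))
    -- z is a continuously differentiable solution of the dual problem
    (hz : ∀ s ∈ Set.Icc 0 T, HasDerivWithinAt z (z' s) (Set.Icc 0 T) s)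
    (hz'c : ContinuousOn z' (Set.Icc 0 T))
    (hdual : ∀ s ∈ Set.Ico 0 T, z' s = -(Matrix.mulVec (A s)ᵀ (z s)))
    (hzT : z T = zT) :
    ⟪zT, U T - u T⟫_ℝ
      = ⟪z 0, U 0 - u 0⟫_ℝ
        + ∑ m ∈ Finset.range M, ⟪z (t m), Um m (t m) - U (t m)⟫_ℝ
        + ∑ m ∈ Finset.range M, ∫ s in t m..t (m + 1), ⟪z s, Um' m s - f (U s) s⟫_ℝ := by
  have hmono : MonotoneOn t (Iic M) := monotoneOn_Iic_of_le_succ fun m hm => (htlt m hm).le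
  have hpiece : ∀ m ∈ Finset.range M,
      ⟪z (t m), Um m (t m) - U (t m)⟫_ℝ + ∫ s in t m..t (m + 1), ⟪z s, Um' m s - f (U s) s⟫_ℝ
        = ⟪z (t (m + 1)), U (t (m + 1)) - u (t (m + 1))⟫_ℝ - ⟪z (t m), U (t m) - u (t m)⟫_ℝ := by
    intro m hm
    rw [Finset.mem_range] at hm
    have h0 : 0 ≤ t m := ht0 ▸ hmono (Nat.zero_le M) hm.le (Nat.zero_le m)
    have hT : t (m + 1) ≤ T := htM ▸ hmono hm (mem_Iic.mpr le_rfl) hm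
    have hIcc : Icc (t m) (t (m + 1)) ⊆ Icc 0 T := Icc_subset_Icc h0 hT
    have hIoo : Ioo (t m) (t (m + 1)) ⊆ Ioo 0 T := Ioo_subset_Ioo h0 hT
    rw [integral_inner_residual_eq (htlt m hm)
      (fun s hs => hAavg s (Ioo_subset_Icc_self (hIoo hs)))
      (fun s hs => (hu s (hIcc hs)).mono hIcc) (hu'c.mono hIcc)
      (fun s hs => hode s (Ioo_subset_Ioc_self (hIoo hs)))
      (hUpw m hm) (hUm m hm) (hUm'c m hm)
      (fun s hs => (hz s (hIcc hs)).mono hIcc) (hz'c.mono hIcc)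
      (fun s hs => hdual s (Ioo_subset_Ico_self (hIoo hs)))]
    simp only [inner_sub_right]
    ring
  rw [add_assoc, ← Finset.sum_add_distrib, Finset.sum_congr rfl hpiece,
    Finset.sum_range_sub (fun m => ⟪z (t m), U (t m) - u (t m)⟫_ℝ), ht0, htM, hzT]
  ring

/-- **Error representation (Theorem 1).**
Let `u` solve `u̇ = f(u,t)` on `(0,T]`, let `0 = t₀ < ⋯ < t_M = T` be a partition, and let
`U` be piecewise smooth with respect to the partition: on each `(t_{m-1}, t_m]`, `U` agrees
with a function `Um m` that is continuously differentiable on `[t_{m-1}, t_m]` with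
derivative `Um' m` (so the right limit is `U(t_{m-1}⁺) = Um m (t_{m-1})` and the residual is
`R = Um' m - f(U,·)` on the subinterval).  Let `Ā` be continuous with
`Ā(t)(U(t) − u(t)) = f(U(t),t) − f(u(t),t)`, and let `z` solve the dual problem
`−ż = Āᵀ z` on `[0,T)` with `z(T) = z_T`.  Then
`⟨z_T, U(T) − u(T)⟩ = ⟨z(0), U(0) − u(0)⟩ + Σ_m ⟨z(t_{m−1}), [U]_{m−1}⟩ + ∫₀ᵀ ⟨z, R⟩ dt`. -/
theorem error_representation (N M : ℕ) (hM : 0 < M) (T : ℝ) (hT : 0 < T)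
    (t : ℕ → ℝ) (ht0 : t 0 = 0) (htM : t M = T) (htlt : ∀ m < M, t m < t (m + 1))
    (u U z u' z' : ℝ → EuclideanSpace ℝ (Fin N))
    (Um Um' : ℕ → ℝ → EuclideanSpace ℝ (Fin N))
    (f : EuclideanSpace ℝ (Fin N) → ℝ → EuclideanSpace ℝ (Fin N))
    (A : ℝ → Matrix (Fin N) (Fin N) ℝ)
    (zT : EuclideanSpace ℝ (Fin N))
    -- f is continuous
    (hf : Continuous fun q : EuclideanSpace ℝ (Fin N) × ℝ => f q.1 q.2)
    -- Ā is continuous and satisfies the averaged-Jacobian property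
    (hA : ContinuousOn A (Set.Icc 0 T))
    (hAavg : ∀ s ∈ Set.Icc 0 T, (A s).mulVec (U s - u s) = f (U s) s - f (u s) s)
    -- u is a continuously differentiable solution of the ODE
    (hu : ∀ s ∈ Set.Icc 0 T, HasDerivWithinAt u (u' s) (Set.Icc 0 T) s)
    (hu'c : ContinuousOn u' (Set.Icc 0 T))
    (hode : ∀ s ∈ Set.Ioc 0 T, u' s = f (u s) s)
    -- U is piecewise smooth: on `(t m, t (m+1)]` it agrees with the C¹ function `Um m`
    (hUpw : ∀ m < M, ∀ s ∈ Set.Ioc (t m) (t (m + 1)), Um m s = U s)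
    (hUm : ∀ m < M, ∀ s ∈ Set.Icc (t m) (t (m + 1)),
      HasDerivWithinAt (Um m) (Um' m s) (Set.Icc (t m) (t (m + 1))) s)
    (hUm'c : ∀ m < M, ContinuousOn (Um' m) (Set.Icc (t m) (t (m + 1))))
    -- z is a continuously differentiable solution of the dual problem
    (hz : ∀ s ∈ Set.Icc 0 T, HasDerivWithinAt z (z' s) (Set.Icc 0 T) s)
    (hz'c : ContinuousOn z' (Set.Icc 0 T))
    (hdual : ∀ s ∈ Set.Ico 0 T, z' s = -(Matrix.mulVec (A s)ᵀ (z s)))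
    (hzT : z T = zT) :
    ⟪zT, U T - u T⟫_ℝ
      = ⟪z 0, U 0 - u 0⟫_ℝ
        + ∑ m ∈ Finset.range M, ⟪z (t m), Um m (t m) - U (t m)⟫_ℝ
        + ∑ m ∈ Finset.range M, ∫ s in t m..t (m + 1), ⟪z s, Um' m s - f (U s) s⟫_ℝ :=
  error_representation_general N M T t ht0 htM htlt u U z u' z' Um Um' f A zT hAavg hu hu'c hode
    hUpw hUm hUm'c hz hz'c hdual hzT
end

section
/- Error estimate (Theorem 2). Under the assumptions below, the error decomposes as ⟨z_T, U(T) − u(T)⟩ = E_D + E_G + E_C, where E_D = ⟨z(0), U(0) − u(0)⟩, E_G = Σ_{m=1}^{M} [⟨z(t_{m−1}) − (πz)(t_{m−1}⁺), [U]_{m−1}⟩ + ∫_{t_{m−1}}^{t_m} ⟨z(t) − (πz)(t), R(t)⟩ dt], and E_C = Σ_{m=1}^{M} [⟨(πz)(t_{m−1}⁺), [U]_{m−1}⟩ + ∫_{t_{m−1}}^{t_m} ⟨(πz)(t), R(t)⟩ dt]. Moreover there exist constants C_p and C_p′, depending only on p and the nodes τ₀,…,τ_p, such that |E_D| ≤ ‖z(0)‖·‖U(0)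 − u(0)‖, |E_G| ≤ C_p · max_{1≤m≤M} { Δt_m^{p+1} ( ‖[U]_{m−1}‖/Δt_m + sup_{(t_{m−1},t_m)} ‖R‖ ) } · ∫₀ᵀ ‖z^{(p+1)}(t)‖ dt, and |E_C| ≤ C_p′ · max_{0≤k≤p, 1≤m≤M} ‖Δt_m^{−1} R̄_k^m‖ · ∫₀ᵀ ‖(πz)(t)‖ dt. -/
open MeasureTheory Matrix
open scoped InnerProductSpace

/-- The Lagrange nodal basis `{λ_k}` of polynomials of degree `≤ p` on `[0,1]`
associated with nodes `τ₀ < ⋯ < τ_p`, i.e. `λ_i(τ_j) = δ_{ij}`. -/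
noncomputable def lagB (p : ℕ) (τ : Fin (p + 1) → ℝ) (k : Fin (p + 1)) (x : ℝ) : ℝ :=
  ∏ j ∈ Finset.univ.erase k, (x - τ j) / (τ k - τ j)

/-- The degree-`p` Lagrange interpolant of `z` on the interval `[a, b]` at the
nodal points `a + τ_k (b − a)`: `(πz)(s) = Σ_k λ_k((s−a)/(b−a)) • z(a + τ_k (b−a))`. -/
noncomputable def interpOn {N : ℕ} (p : ℕ) (τ : Fin (p + 1) → ℝ)
    (z : ℝ → EuclideanSpace ℝ (Fin N)) (a b s : ℝ) : EuclideanSpace ℝ (Fin N) :=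
  ∑ k, lagB p τ k ((s - a) / (b - a)) • z (a + τ k * (b - a))

/-!
On each subinterval, `⟪z, U - u⟫` changes at the rate `⟪z, R⟫`: the derivative of the dual
solution cancels `f(U) - f(u) = Ā(U - u)`. Telescoping over the partition picks up the jumps of
`U`, and writing `z = (z - πz) + πz` gives the decomposition. Since `π` reproduces polynomials of
degree `≤ p`, `z - πz` is controlled by the integral Taylor remainder, which bounds `E_G`. In `E_C`
the interpolant meets `R` only through the discrete residuals `R̄_k^m`, and the nodal values of a
polynomial are bounded by its `L¹` norm (equivalence of norms on the nodal values), which after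
rescaling to `[t_m, t_{m+1}]` bounds `E_C`.
-/

open Set Finset
open scoped Nat

section LagrangeBasis

variable {p : ℕ} {τ : Fin (p + 1) → ℝ}

theorem lagB_eq_eval_basis (k : Fin (p + 1)) (x : ℝ) :
    lagB p τ k x = (Lagrange.basis univ τ k).eval x := by
  simp only [lagB, Lagrange.basis, Lagrange.basisDivisor, Polynomial.eval_prod]
  refine prod_congr rfl fun j _ => ?_
  simp [div_eq_inv_mul, mul_comm]

@[fun_prop]
theorem continuous_lagB (k : Fin (p + 1)) : Continuous (lagB p τ k) := by
  simpa only [funext (lagB_eq_eval_basis k)] using Polynomial.continuous _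

theorem sum_lagB_mul_eq_eval_interpolate (c : Fin (p + 1) → ℝ) (x : ℝ) :
    ∑ j, c j * lagB p τ j x = (Lagrange.interpolate univ τ c).eval x := by
  simp [Lagrange.interpolate_apply, Polynomial.eval_finsetSum, lagB_eq_eval_basis]

theorem sum_lagB_mul_pow (hτ : StrictMono τ) {j : ℕ} (hj : j ≤ p) (x : ℝ) :
    ∑ k, lagB p τ k x * τ k ^ j = x ^ j := by
  have hdeg : ((Polynomial.X : Polynomial ℝ) ^ j).degree < #(univ : Finset (Fin (p + 1))) := by
    rw [Polynomial.degree_X_pow, card_univ, Fintype.card_fin]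
    exact_mod_cast Nat.lt_succ_of_le hj
  have := congrArg (Polynomial.eval x)
    (Lagrange.eq_interpolate (fun a _ b _ h => hτ.injective h) hdeg)
  rw [Polynomial.eval_pow, Polynomial.eval_X, ← sum_lagB_mul_eq_eval_interpolate] at this
  simpa [mul_comm] using this.symm

end LagrangeBasis

theorem exists_sum_abs_lagB_le (p : ℕ) (τ : Fin (p + 1) → ℝ) :
    ∃ Λ, 0 ≤ Λ ∧ ∀ x ∈ Icc (0 : ℝ) 1, ∑ k, |lagB p τ k x| ≤ Λ := by
  obtain ⟨Λ, hΛ⟩ := isCompact_Icc.exists_bound_of_continuousOn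
    (f := fun x => ∑ k, |lagB p τ k x|) (by fun_prop)
  have hle : ∀ x ∈ Icc (0 : ℝ) 1, ∑ k, |lagB p τ k x| ≤ Λ :=
    fun x hx => (le_abs_self _).trans (hΛ x hx)
  exact ⟨Λ, (sum_nonneg fun k _ => abs_nonneg _).trans (hle 0 (left_mem_Icc.mpr zero_le_one)), hle⟩

section Taylor

variable {E : Type*} [NormedAddCommGroup E] [NormedSpace ℝ E] {f : ℝ → E} {n : ℕ}

theorem iteratedDerivWithin_eq_of_subset {s t : Set ℝ} {x : ℝ} (st : s ⊆ t)
    (hs : UniqueDiffOn ℝ s) (ht : UniqueDiffOn ℝ t) (hf : ContDiffOn ℝ n f t) (hx : x ∈ s) :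
    iteratedDerivWithin n f s x = iteratedDerivWithin n f t x := by
  simp only [iteratedDerivWithin_eq_iteratedFDerivWithin,
    iteratedFDerivWithin_subset st hs ht hf hx]

theorem taylorWithinEval_eq_of_subset {s t : Set ℝ} {x₀ : ℝ} (st : s ⊆ t)
    (hs : UniqueDiffOn ℝ s) (ht : UniqueDiffOn ℝ t) (hf : ContDiffOn ℝ n f t) (hx₀ : x₀ ∈ s)
    (x : ℝ) : taylorWithinEval f n s x₀ x = taylorWithinEval f n t x₀ x := by
  simp only [taylor_within_apply]
  refine sum_congr rfl fun k hk => ?_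
  rw [iteratedDerivWithin_eq_of_subset st hs ht
    (hf.of_le (by exact_mod_cast Nat.lt_succ_iff.mp (mem_range.mp hk))) hx₀]

theorem norm_sub_taylorWithinEval_le [CompleteSpace E] {α β a b x : ℝ}
    (hf : ContDiffOn ℝ (n + 1 : ℕ) f (Icc α β))
    (hαa : α ≤ a) (hax : a ≤ x) (hxb : x ≤ b) (hbβ : b ≤ β) :
    ‖f x - taylorWithinEval f n (Icc α β) a x‖
      ≤ (b - a) ^ n / n ! * ∫ t in a..b, ‖iteratedDerivWithin (n + 1) f (Icc α β) t‖ := by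
  rcases hax.eq_or_lt with rfl | hax'
  · rw [taylorWithinEval_self, sub_self, norm_zero]
    refine mul_nonneg (by have := sub_nonneg.mpr hxb; positivity) ?_
    exact intervalIntegral.integral_nonneg hxb fun _ _ => norm_nonneg _
  have hsub : uIcc a x ⊆ Icc α β := by
    rw [uIcc_of_le hax]; exact Icc_subset_Icc hαa (hxb.trans hbβ)
  have hu : UniqueDiffOn ℝ (uIcc a x) := uniqueDiffOn_uIcc hax'.ne
  have hαβ : UniqueDiffOn ℝ (Icc α β) := uniqueDiffOn_Icc (by linarith)
  have hD : ContinuousOn (fun t => ‖iteratedDerivWithin (n + 1) f (Icc α β) t‖) (Icc a b) :=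
    (hf.continuousOn_iteratedDerivWithin le_rfl hαβ).norm.mono (Icc_subset_Icc hαa hbβ)
  have hrem := taylor_integral_remainder (hf.mono hsub)
  rw [taylorWithinEval_eq_of_subset hsub hu hαβ (hf.of_le (by norm_cast; omega)) left_mem_uIcc,
    intervalIntegral.integral_congr fun t ht =>
      congrArg _ (iteratedDerivWithin_eq_of_subset hsub hu hαβ hf ht)] at hrem
  rw [hrem]
  calc _ ≤ ∫ t in a..x, (b - a) ^ n / n ! * ‖iteratedDerivWithin (n + 1) f (Icc α β) t‖ := by
        refine intervalIntegral.norm_integral_le_of_norm_le hax (ae_of_all _ fun t ht => ?_)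
          (((hD.mono (Icc_subset_Icc le_rfl hxb)).intervalIntegrable_of_Icc hax).const_mul _)
        have hxt : 0 ≤ x - t := sub_nonneg.mpr ht.2
        rw [norm_smul, Real.norm_eq_abs, abs_of_nonneg (by positivity)]
        gcongr
        linarith [ht.1]
    _ ≤ _ := by
        rw [intervalIntegral.integral_const_mul]
        have hab : 0 ≤ b - a := sub_nonneg.mpr (hax.trans hxb)
        refine mul_le_mul_of_nonneg_left ?_ (by positivity)
        exact intervalIntegral.integral_mono_interval le_rfl hax hxb
          (ae_of_all _ fun _ => norm_nonneg _) (hD.intervalIntegrable_of_Icc (hax.trans hxb))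

end Taylor

section Interpolation

variable {p N : ℕ} {τ : Fin (p + 1) → ℝ}

theorem interpOn_sub (z g : ℝ → EuclideanSpace ℝ (Fin N)) (a b s : ℝ) :
    interpOn p τ (z - g) a b s = interpOn p τ z a b s - interpOn p τ g a b s := by
  simp only [interpOn, Pi.sub_apply, smul_sub, sum_sub_distrib]

theorem interpOn_polynomial (hτ : StrictMono τ) {a b : ℝ} (hab : a ≠ b)
    (c : ℕ → EuclideanSpace ℝ (Fin N)) (s : ℝ) :
    interpOn p τ (fun y => ∑ j ∈ range (p + 1), (y - a) ^ j • c j) a b s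
      = ∑ j ∈ range (p + 1), (s - a) ^ j • c j := by
  have hba : b - a ≠ 0 := sub_ne_zero.mpr hab.symm
  have hmoment : ∀ j ∈ range (p + 1),
      ∑ k, lagB p τ k ((s - a) / (b - a)) * (τ k * (b - a)) ^ j = (s - a) ^ j := by
    intro j hj
    simp_rw [mul_pow, ← mul_assoc, ← sum_mul,
      sum_lagB_mul_pow hτ (Nat.lt_succ_iff.mp (mem_range.mp hj)), div_pow,
      div_mul_cancel₀ _ (pow_ne_zero _ hba)]
  simp_rw [interpOn, add_sub_cancel_left, smul_sum, smul_smul]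
  rw [sum_comm]
  exact sum_congr rfl fun j hj => by rw [← sum_smul, hmoment j hj]

@[fun_prop]
theorem continuous_interpOn (z : ℝ → EuclideanSpace ℝ (Fin N)) (a b : ℝ) :
    Continuous (interpOn p τ z a b) := by
  unfold interpOn; fun_prop

theorem norm_interpOn_le {Λ C : ℝ} (hΛ : ∀ x ∈ Icc (0 : ℝ) 1, ∑ k, |lagB p τ k x| ≤ Λ)
    {g : ℝ → EuclideanSpace ℝ (Fin N)} {a b s : ℝ} (hs : (s - a) / (b - a) ∈ Icc (0 : ℝ) 1)
    (hC : 0 ≤ C) (hg : ∀ k, ‖g (a + τ k * (b - a))‖ ≤ C) :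
    ‖interpOn p τ g a b s‖ ≤ Λ * C :=
  calc ‖interpOn p τ g a b s‖
      ≤ ∑ k, |lagB p τ k ((s - a) / (b - a))| * C := by
        refine (norm_sum_le _ _).trans (sum_le_sum fun k _ => ?_)
        rw [norm_smul, Real.norm_eq_abs]
        exact mul_le_mul_of_nonneg_left (hg k) (abs_nonneg _)
    _ ≤ Λ * C := by rw [← sum_mul]; exact mul_le_mul_of_nonneg_right (hΛ _ hs) hC

theorem integral_norm_interpOn (z : ℝ → EuclideanSpace ℝ (Fin N)) {a b : ℝ} (hab : a ≠ b) :
    ∫ s in a..b, ‖interpOn p τ z a b s‖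
      = (b - a) * ∫ x in (0 : ℝ)..1, ‖∑ j, lagB p τ j x • z (a + τ j * (b - a))‖ := by
  have hba : b - a ≠ 0 := sub_ne_zero.mpr hab.symm
  have := intervalIntegral.smul_integral_comp_mul_add (a := 0) (b := 1)
    (fun s => ‖interpOn p τ z a b s‖) (b - a) a
  simp only [mul_zero, zero_add, mul_one, sub_add_cancel, smul_eq_mul] at this
  rw [← this]
  congr 2 with x
  simp [interpOn, mul_div_cancel_left₀ _ hba]

theorem node_mem_Icc (hτ : StrictMono τ) (hτ0 : 0 ≤ τ 0) (hτ1 : τ (Fin.last p) ≤ 1)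
    {a b : ℝ} (hab : a ≤ b) (k : Fin (p + 1)) : a + τ k * (b - a) ∈ Icc a b := by
  have h0 : 0 ≤ τ k := hτ0.trans (hτ.monotone (Fin.zero_le k))
  have h1 : τ k ≤ 1 := (hτ.monotone (Fin.le_last k)).trans hτ1
  constructor <;> nlinarith

theorem div_sub_mem_Icc {a b s : ℝ} (hab : a < b) (hs : s ∈ Icc a b) :
    (s - a) / (b - a) ∈ Icc (0 : ℝ) 1 :=
  ⟨div_nonneg (by linarith [hs.1]) (by linarith),
    (div_le_one (by linarith)).mpr (by linarith [hs.2])⟩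

theorem norm_sub_interpOn_le (hτ : StrictMono τ) (hτ0 : 0 ≤ τ 0) (hτ1 : τ (Fin.last p) ≤ 1)
    {Λ : ℝ} (hΛ : ∀ x ∈ Icc (0 : ℝ) 1, ∑ k, |lagB p τ k x| ≤ Λ)
    {z : ℝ → EuclideanSpace ℝ (Fin N)} {α β a b s : ℝ}
    (hz : ContDiffOn ℝ (p + 1 : ℕ) z (Icc α β)) (hαa : α ≤ a) (hab : a < b) (hbβ : b ≤ β)
    (hs : s ∈ Icc a b) :
    ‖z s - interpOn p τ z a b s‖
      ≤ (1 + Λ) / p ! * ((b - a) ^ p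
        * ∫ σ in a..b, ‖iteratedDerivWithin (p + 1) z (Icc α β) σ‖) := by
  set P := fun y => taylorWithinEval z p (Icc α β) a y
  set c := (b - a) ^ p / p ! * ∫ σ in a..b, ‖iteratedDerivWithin (p + 1) z (Icc α β) σ‖
  have hrem : ∀ y ∈ Icc a b, ‖(z - P) y‖ ≤ c := fun y hy =>
    norm_sub_taylorWithinEval_le hz hαa hy.1 hy.2 hbβ
  have hc : 0 ≤ c := (norm_nonneg _).trans (hrem a (left_mem_Icc.mpr hab.le))
  have hπP : interpOn p τ P a b s = P s := by
    simp only [P, taylor_within_apply, mul_comm _ ((_ - a) ^ _), mul_smul]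
    exact interpOn_polynomial hτ hab.ne _ s
  have hsplit : z s - interpOn p τ z a b s = (z - P) s - interpOn p τ (z - P) a b s := by
    rw [interpOn_sub, hπP, Pi.sub_apply]; abel
  calc ‖z s - interpOn p τ z a b s‖
      ≤ c + Λ * c := by
        rw [hsplit]
        refine (norm_sub_le _ _).trans (add_le_add (hrem s hs) ?_)
        exact norm_interpOn_le hΛ (div_sub_mem_Icc hab hs) hc
          fun k => hrem _ (node_mem_Icc hτ hτ0 hτ1 hab.le k)
    _ = _ := by simp only [c]; ring

end Interpolation

/-- The `L¹(0,1)` norm of the polynomial of degree `≤ p` taking the values `c` at the nodes. -/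
noncomputable def lagL1Norm (p : ℕ) (τ : Fin (p + 1) → ℝ) (c : Fin (p + 1) → ℝ) : ℝ :=
  ∫ x in (0 : ℝ)..1, |∑ j, c j * lagB p τ j x|

section NormEquivalence

variable {p : ℕ} {τ : Fin (p + 1) → ℝ}

theorem lagL1Norm_nonneg (c : Fin (p + 1) → ℝ) : 0 ≤ lagL1Norm p τ c :=
  intervalIntegral.integral_nonneg zero_le_one fun _ _ => abs_nonneg _

theorem continuous_lagL1Norm : Continuous (lagL1Norm p τ) :=
  intervalIntegral.continuous_parametric_intervalIntegral_of_continuous' (by fun_prop) _ _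

theorem lagL1Norm_smul (r : ℝ) (c : Fin (p + 1) → ℝ) :
    lagL1Norm p τ (r • c) = |r| * lagL1Norm p τ c := by
  simp only [lagL1Norm, Pi.smul_apply, smul_eq_mul, mul_assoc, ← mul_sum, abs_mul,
    intervalIntegral.integral_const_mul]

theorem lagL1Norm_pos (hτ : StrictMono τ) {c : Fin (p + 1) → ℝ} (hc : c ≠ 0) :
    0 < lagL1Norm p τ c := by
  have hQ : Lagrange.interpolate univ τ c ≠ 0 := fun h => hc <| funext fun k => by
    have := Lagrange.eval_interpolate_at_node c (fun a _ b _ h => hτ.injective h) (mem_univ k)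
    rwa [h, Polynomial.eval_zero, eq_comm] at this
  obtain ⟨x, hx, hQx⟩ : ∃ x ∈ Icc (0 : ℝ) 1, (Lagrange.interpolate univ τ c).eval x ≠ 0 := by
    by_contra! h
    exact hQ (Polynomial.eq_zero_of_infinite_isRoot _ ((Icc_infinite zero_lt_one).mono h))
  refine intervalIntegral.integral_pos zero_lt_one (by fun_prop) (fun _ _ => abs_nonneg _)
    ⟨x, hx, ?_⟩
  rwa [sum_lagB_mul_eq_eval_interpolate, abs_pos]

theorem exists_norm_le_mul_lagL1Norm (hτ : StrictMono τ) :
    ∃ K, 0 ≤ K ∧ ∀ c : Fin (p + 1) → ℝ, ‖c‖ ≤ K * lagL1Norm p τ c := by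
  obtain ⟨c₀, hc₀, hmin⟩ := (isCompact_sphere (0 : Fin (p + 1) → ℝ) 1).exists_isMinOn
    (NormedSpace.sphere_nonempty.mpr zero_le_one) (continuous_lagL1Norm (τ := τ)).continuousOn
  have hε : 0 < lagL1Norm p τ c₀ :=
    lagL1Norm_pos hτ (ne_zero_of_mem_sphere one_ne_zero ⟨c₀, hc₀⟩)
  refine ⟨(lagL1Norm p τ c₀)⁻¹, inv_nonneg.mpr hε.le, fun c => ?_⟩
  rcases eq_or_ne c 0 with rfl | hc
  · simpa using mul_nonneg (inv_nonneg.mpr hε.le) (lagL1Norm_nonneg 0)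
  have hcn : 0 < ‖c‖ := norm_pos_iff.mpr hc
  have h := hmin (show ‖c‖⁻¹ • c ∈ Metric.sphere 0 1 by simp [norm_smul, hcn.ne'])
  rw [Set.mem_ofPred_eq, lagL1Norm_smul, abs_of_pos (inv_pos.mpr hcn), inv_mul_eq_div,
    le_div_iff₀ hcn] at h
  rwa [inv_mul_eq_div, le_div_iff₀ hε, mul_comm]

/-- Pairing every `w j` with the direction of `w k` reduces this to the scalar case, so `K` does
not depend on `E`. -/
theorem norm_le_mul_integral_norm_sum_lagB {E : Type*} [NormedAddCommGroup E]
    [InnerProductSpace ℝ E] {K : ℝ} (hK0 : 0 ≤ K)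
    (hK : ∀ c : Fin (p + 1) → ℝ, ‖c‖ ≤ K * lagL1Norm p τ c) (w : Fin (p + 1) → E)
    (k : Fin (p + 1)) :
    ‖w k‖ ≤ K * ∫ x in (0 : ℝ)..1, ‖∑ j, lagB p τ j x • w j‖ := by
  set e := ‖w k‖⁻¹ • w k
  set c : Fin (p + 1) → ℝ := fun j => ⟪w j, e⟫_ℝ
  have hck : c k = ‖w k‖ := by
    rcases eq_or_ne (w k) 0 with h | h
    · simp [c, h]
    · simp [c, e, real_inner_smul_right]
      field_simp
  have he : ‖e‖ ≤ 1 := by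
    rcases eq_or_ne (w k) 0 with h | h
    · simp [e, h]
    · simp [e, norm_smul, norm_ne_zero_iff.mpr h]
  have hνc : lagL1Norm p τ c ≤ ∫ x in (0 : ℝ)..1, ‖∑ j, lagB p τ j x • w j‖ := by
    refine intervalIntegral.integral_mono_on zero_le_one
      (Continuous.intervalIntegrable (by fun_prop) _ _)
      (Continuous.intervalIntegrable (by fun_prop) _ _) fun x _ => ?_
    have : ∑ j, c j * lagB p τ j x = ⟪∑ j, lagB p τ j x • w j, e⟫_ℝ := by
      simp [c, sum_inner, real_inner_smul_left, mul_comm]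
    rw [this]
    exact (abs_real_inner_le_norm _ _).trans (mul_le_of_le_one_right (norm_nonneg _) he)
  calc ‖w k‖ = |c k| := by rw [hck, abs_norm]
    _ ≤ ‖c‖ := norm_le_pi_norm c k
    _ ≤ K * lagL1Norm p τ c := hK c
    _ ≤ _ := mul_le_mul_of_nonneg_left hνc hK0

end NormEquivalence

theorem le_biSup_of_bddAbove_image {ι : Type*} {f : ι → ℝ} {S : Set ι}
    (hf : BddAbove (f '' S)) {x : ι} (hx : x ∈ S) : f x ≤ ⨆ y ∈ S, f y := by
  obtain ⟨B, hB⟩ := hf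
  -- an empty inner supremum is `0` in `ℝ`, hence the bound `max B 0`
  have hbdd : BddAbove (range fun y => ⨆ _ : y ∈ S, f y) := by
    refine ⟨max B 0, forall_mem_range.mpr fun y => ?_⟩
    by_cases hy : y ∈ S
    · rw [ciSup_pos hy]; exact le_max_of_le_left (hB (mem_image_of_mem f hy))
    · simp [hy]
  simpa [ciSup_pos hx] using le_ciSup hbdd x

theorem norm_le_biSup_Ioo_of_eqOn {E : Type*} [NormedAddCommGroup E] {a b : ℝ} {R F : ℝ → E}
    (hF : ContinuousOn F (Icc a b)) (hRF : EqOn R F (Ioo a b)) {s : ℝ} (hs : s ∈ Ioo a b) :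
    ‖R s‖ ≤ ⨆ r ∈ Ioo a b, ‖R r‖ := by
  obtain ⟨B, hB⟩ := isCompact_Icc.exists_bound_of_continuousOn hF
  refine le_biSup_of_bddAbove_image (f := fun r => ‖R r‖) ⟨B, ?_⟩ hs
  rintro _ ⟨r, hr, rfl⟩
  simpa only [hRF hr] using hB r (Ioo_subset_Icc_self hr)

theorem ContinuousOn.intervalIntegrable_of_eqOn_Ioo {E : Type*} [NormedAddCommGroup E] {a b : ℝ}
    {R F : ℝ → E} (hab : a ≤ b) (hF : ContinuousOn F (Icc a b)) (hRF : EqOn R F (Ioo a b)) :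
    IntervalIntegrable R volume a b :=
  (hF.intervalIntegrable_of_Icc hab).congr_uIoo fun _ hs =>
    (hRF (by rwa [uIoo_of_le hab] at hs)).symm

theorem abs_sum_le_mul_sup'_mul_sum {ι : Type*} {s : Finset ι} (hs : s.Nonempty)
    {x y I : ι → ℝ} {c : ℝ} (hc : 0 ≤ c) (hI : ∀ i ∈ s, 0 ≤ I i)
    (h : ∀ i ∈ s, |x i| ≤ c * y i * I i) :
    |∑ i ∈ s, x i| ≤ c * s.sup' hs y * ∑ i ∈ s, I i := by
  rw [mul_sum]
  refine (abs_sum_le_sum_abs _ _).trans (sum_le_sum fun i hi => (h i hi).trans ?_)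
  gcongr
  · exact hI i hi
  · exact le_sup' y hi

theorem continuousOn_residual {E F : Type*} [TopologicalSpace E] [NormedAddCommGroup F]
    {f : E → ℝ → F} (hf : Continuous fun q : E × ℝ => f q.1 q.2) {V : ℝ → E} {V' : ℝ → F}
    {s : Set ℝ} (hV : ContinuousOn V s) (hV' : ContinuousOn V' s) :
    ContinuousOn (fun r => V' r - f (V r) r) s :=
  hV'.sub (hf.comp_continuousOn (f := fun r => (V r, r)) (hV.prodMk continuousOn_id))

section InnerProduct

variable {E : Type*} [NormedAddCommGroup E] [InnerProductSpace ℝ E] {a b : ℝ}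

theorem intervalIntegrable_inner_of_eqOn_Ioo {g R F : ℝ → E} (hab : a ≤ b)
    (hg : ContinuousOn g (Icc a b)) (hF : ContinuousOn F (Icc a b)) (hRF : EqOn R F (Ioo a b)) :
    IntervalIntegrable (fun s => ⟪g s, R s⟫_ℝ) volume a b :=
  (hg.inner hF).intervalIntegrable_of_eqOn_Ioo hab fun s hs => by simp only [hRF hs]

theorem inner_add_integral_inner_eq_add {g h R : ℝ → E} (j : E)
    (hgh : IntervalIntegrable (fun s => ⟪g s - h s, R s⟫_ℝ) volume a b)
    (hh : IntervalIntegrable (fun s => ⟪h s, R s⟫_ℝ) volume a b) :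
    ⟪g a, j⟫_ℝ + ∫ s in a..b, ⟪g s, R s⟫_ℝ
      = (⟪g a - h a, j⟫_ℝ + ∫ s in a..b, ⟪g s - h s, R s⟫_ℝ)
        + (⟪h a, j⟫_ℝ + ∫ s in a..b, ⟪h s, R s⟫_ℝ) := by
  have : ∫ s in a..b, ⟪g s, R s⟫_ℝ
      = ∫ s in a..b, (⟪g s - h s, R s⟫_ℝ + ⟪h s, R s⟫_ℝ) := by
    simp only [inner_sub_left, sub_add_cancel]
  rw [this, intervalIntegral.integral_add hgh hh, inner_sub_left]
  ring

theorem abs_inner_add_integral_inner_le {e R : ℝ → E} {j : E} {C S : ℝ} (hab : a ≤ b)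
    (he : ∀ s ∈ Icc a b, ‖e s‖ ≤ C) (hR : ∀ s ∈ Ioo a b, ‖R s‖ ≤ S) :
    |⟪e a, j⟫_ℝ + ∫ s in a..b, ⟪e s, R s⟫_ℝ| ≤ C * (‖j‖ + (b - a) * S) := by
  have hC : 0 ≤ C := (norm_nonneg _).trans (he a (left_mem_Icc.mpr hab))
  have hint : ‖∫ s in a..b, ⟪e s, R s⟫_ℝ‖ ≤ C * S * |b - a| := by
    refine intervalIntegral.norm_integral_le_of_norm_le_const_ae ?_
    filter_upwards [volume.ae_ne b] with s hsb hs
    rw [uIoc_of_le hab] at hs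
    have hs' : s ∈ Ioo a b := ⟨hs.1, lt_of_le_of_ne hs.2 hsb⟩
    exact (norm_inner_le_norm (𝕜 := ℝ) _ _).trans
      (mul_le_mul (he s (Ioo_subset_Icc_self hs')) (hR s hs') (norm_nonneg _) hC)
  rw [Real.norm_eq_abs, abs_of_nonneg (sub_nonneg.mpr hab)] at hint
  calc _ ≤ |⟪e a, j⟫_ℝ| + |∫ s in a..b, ⟪e s, R s⟫_ℝ| := abs_add_le _ _
    _ ≤ C * ‖j‖ + C * S * (b - a) :=
        add_le_add ((abs_real_inner_le_norm _ _).trans (mul_le_mul_of_nonneg_right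
          (he a (left_mem_Icc.mpr hab)) (norm_nonneg _))) hint
    _ = _ := by ring

end InnerProduct

section LocalTerms

variable {p N : ℕ} {τ : Fin (p + 1) → ℝ}

theorem inner_interpOn_add_integral_eq_sum {z R : ℝ → EuclideanSpace ℝ (Fin N)} {a b : ℝ}
    (hR : IntervalIntegrable R volume a b) (j : EuclideanSpace ℝ (Fin N)) :
    ⟪interpOn p τ z a b a, j⟫_ℝ + ∫ s in a..b, ⟪interpOn p τ z a b s, R s⟫_ℝ
      = ∑ k, ⟪z (a + τ k * (b - a)),
          lagB p τ k 0 • j + ∫ s in a..b, lagB p τ k ((s - a) / (b - a)) • R s⟫_ℝ := by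
  have hLR : ∀ k, IntervalIntegrable (fun s => lagB p τ k ((s - a) / (b - a)) • R s)
      volume a b := fun k => hR.continuousOn_smul (by fun_prop)
  have hint : ∀ k,
      ∫ s in a..b, lagB p τ k ((s - a) / (b - a)) * ⟪z (a + τ k * (b - a)), R s⟫_ℝ
        = ⟪z (a + τ k * (b - a)), ∫ s in a..b, lagB p τ k ((s - a) / (b - a)) • R s⟫_ℝ := by
    intro k
    simpa [real_inner_smul_right] using
      (innerSL ℝ (z (a + τ k * (b - a)))).intervalIntegral_comp_comm (hLR k)
  simp only [interpOn, sub_self, zero_div, sum_inner, real_inner_smul_left, inner_add_right,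
    real_inner_smul_right]
  rw [intervalIntegral.integral_finsetSum fun k _ => ?_, ← sum_add_distrib]
  · exact sum_congr rfl fun k _ => by rw [hint k]
  · have : IntervalIntegrable
        (fun s => ⟪z (a + τ k * (b - a)), lagB p τ k ((s - a) / (b - a)) • R s⟫_ℝ)
        volume a b :=
      ⟨(hLR k).1.const_inner _, (hLR k).2.const_inner _⟩
    simpa [real_inner_smul_right] using this

theorem abs_inner_interpOn_add_integral_le {K : ℝ} (hK0 : 0 ≤ K)
    (hK : ∀ c : Fin (p + 1) → ℝ, ‖c‖ ≤ K * lagL1Norm p τ c)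
    {z R : ℝ → EuclideanSpace ℝ (Fin N)} {a b ρ : ℝ} (hab : a < b)
    (hR : IntervalIntegrable R volume a b) (j : EuclideanSpace ℝ (Fin N))
    (hρ : ∀ k, ‖lagB p τ k 0 • j + ∫ s in a..b, lagB p τ k ((s - a) / (b - a)) • R s‖
      / (b - a) ≤ ρ) :
    |⟪interpOn p τ z a b a, j⟫_ℝ + ∫ s in a..b, ⟪interpOn p τ z a b s, R s⟫_ℝ|
      ≤ (p + 1) * K * ρ * ∫ s in a..b, ‖interpOn p τ z a b s‖ := by
  rw [inner_interpOn_add_integral_eq_sum hR, integral_norm_interpOn z hab.ne]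
  have hba : 0 < b - a := sub_pos.mpr hab
  calc _ ≤ ∑ k, ‖z (a + τ k * (b - a))‖
        * ‖lagB p τ k 0 • j + ∫ s in a..b, lagB p τ k ((s - a) / (b - a)) • R s‖ :=
        (abs_sum_le_sum_abs _ _).trans (sum_le_sum fun k _ => abs_real_inner_le_norm _ _)
    _ ≤ ∑ _k : Fin (p + 1), (K * ∫ x in (0 : ℝ)..1,
          ‖∑ j, lagB p τ j x • z (a + τ j * (b - a))‖) * (ρ * (b - a)) := by
        gcongr with k
        · exact mul_nonneg hK0 (intervalIntegral.integral_nonneg zero_le_one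
            fun _ _ => norm_nonneg _)
        · exact norm_le_mul_integral_norm_sum_lagB hK0 hK (fun j => z (a + τ j * (b - a))) k
        · exact (div_le_iff₀ hba).mp (hρ k)
    _ = _ := by
        simp only [sum_const, card_univ, Fintype.card_fin, nsmul_eq_mul]
        push_cast
        ring

theorem abs_inner_sub_interpOn_add_integral_le (hτ : StrictMono τ) (hτ0 : 0 ≤ τ 0)
    (hτ1 : τ (Fin.last p) ≤ 1) {Λ : ℝ} (hΛ : ∀ x ∈ Icc (0 : ℝ) 1, ∑ k, |lagB p τ k x| ≤ Λ)
    {z R : ℝ → EuclideanSpace ℝ (Fin N)} {α β a b S : ℝ}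
    (hz : ContDiffOn ℝ (p + 1 : ℕ) z (Icc α β)) (hαa : α ≤ a) (hab : a < b) (hbβ : b ≤ β)
    (hR : ∀ s ∈ Ioo a b, ‖R s‖ ≤ S) (j : EuclideanSpace ℝ (Fin N)) :
    |⟪z a - interpOn p τ z a b a, j⟫_ℝ + ∫ s in a..b, ⟪z s - interpOn p τ z a b s, R s⟫_ℝ|
      ≤ (1 + Λ) / p ! * ((b - a) ^ (p + 1) * (‖j‖ / (b - a) + S))
        * ∫ s in a..b, ‖iteratedDerivWithin (p + 1) z (Icc α β) s‖ := by
  refine (abs_inner_add_integral_inner_le hab.le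
    (fun s hs => norm_sub_interpOn_le hτ hτ0 hτ1 hΛ hz hαa hab hbβ hs) hR).trans_eq ?_
  field_simp [(sub_pos.mpr hab).ne']
  ring

end LocalTerms

theorem inner_toLp_transpose_mulVec {n : Type*} [Fintype n] (A : Matrix n n ℝ)
    (x y : EuclideanSpace ℝ n) :
    ⟪WithLp.toLp 2 (Aᵀ *ᵥ x.ofLp), y⟫_ℝ = ⟪x, WithLp.toLp 2 (A *ᵥ y.ofLp)⟫_ℝ := by
  simp only [EuclideanSpace.inner_eq_star_dotProduct, star_trivial, mulVec_transpose,
    dotProduct_mulVec, dotProduct_comm]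

theorem Icc_subset_Icc_of_forall_lt_succ {t : ℕ → ℝ} {M : ℕ} (ht : ∀ m < M, t m < t (m + 1))
    {m : ℕ} (hm : m < M) : Icc (t m) (t (m + 1)) ⊆ Icc (t 0) (t M) := by
  have hmono : MonotoneOn t (Set.Iic M) :=
    monotoneOn_of_le_add_one ordConnected_Iic fun i _ _ hi => (ht i hi).le
  exact Icc_subset_Icc (hmono (Nat.zero_le M) hm.le (Nat.zero_le m))
    (hmono hm (le_refl M) hm)

section ErrorRepresentation

variable {N : ℕ} {z u V V' : ℝ → EuclideanSpace ℝ (Fin N)}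
  {f : EuclideanSpace ℝ (Fin N) → ℝ → EuclideanSpace ℝ (Fin N)}
  {A : ℝ → Matrix (Fin N) (Fin N) ℝ}

theorem inner_dual_sub_eq_integral_residual {a b : ℝ} (hab : a ≤ b)
    (hz : ContinuousOn z (Icc a b)) (hu : ContinuousOn u (Icc a b))
    (hV : ContinuousOn V (Icc a b))
    (hz' : ∀ s ∈ Ioo a b, HasDerivAt z (WithLp.toLp 2 (-((A s)ᵀ *ᵥ z s))) s)
    (hu' : ∀ s ∈ Ioo a b, HasDerivAt u (f (u s) s) s)
    (hV' : ∀ s ∈ Ioo a b, HasDerivAt V (V' s) s)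
    (hA : ∀ s ∈ Ioo a b, (A s) *ᵥ (V s - u s) = f (V s) s - f (u s) s)
    (hint : IntervalIntegrable (fun s => ⟪z s, V' s - f (V s) s⟫_ℝ) volume a b) :
    ⟪z b, V b - u b⟫_ℝ - ⟪z a, V a - u a⟫_ℝ = ∫ s in a..b, ⟪z s, V' s - f (V s) s⟫_ℝ := by
  refine (intervalIntegral.integral_eq_sub_of_hasDeriv_right_of_le hab
    (hz.inner (hV.sub hu)) (fun s hs => HasDerivAt.hasDerivWithinAt ?_) hint).symm
  refine ((hz' s hs).inner ℝ ((hV' s hs).sub (hu' s hs))).congr_deriv ?_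
  rw [WithLp.toLp_neg, inner_neg_left, inner_toLp_transpose_mulVec, Pi.sub_apply,
    WithLp.ofLp_sub, hA s hs]
  simp only [WithLp.toLp_sub, WithLp.toLp_ofLp, inner_sub_right]
  ring

end ErrorRepresentation

theorem inner_error_eq_sum {N M : ℕ} {T : ℝ} {t : ℕ → ℝ} (ht0 : t 0 = 0) (htM : t M = T)
    (htlt : ∀ m < M, t m < t (m + 1)) {u U z u' : ℝ → EuclideanSpace ℝ (Fin N)}
    {Um Um' : ℕ → ℝ → EuclideanSpace ℝ (Fin N)}
    {f : EuclideanSpace ℝ (Fin N) → ℝ → EuclideanSpace ℝ (Fin N)}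
    {A : ℝ → Matrix (Fin N) (Fin N) ℝ}
    (hAavg : ∀ s ∈ Icc 0 T, (A s).mulVec (U s - u s) = f (U s) s - f (u s) s)
    (hu : ∀ s ∈ Icc 0 T, HasDerivWithinAt u (u' s) (Icc 0 T) s)
    (hode : ∀ s ∈ Ioc 0 T, u' s = f (u s) s)
    (hUpw : ∀ m < M, ∀ s ∈ Ioc (t m) (t (m + 1)), Um m s = U s)
    (hUm : ∀ m < M, ∀ s ∈ Icc (t m) (t (m + 1)),
      HasDerivWithinAt (Um m) (Um' m s) (Icc (t m) (t (m + 1))) s)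
    (hz : ContinuousOn z (Icc 0 T))
    (hdual : ∀ s ∈ Ico 0 T,
      HasDerivWithinAt z (WithLp.toLp 2 (-(Matrix.mulVec (A s)ᵀ (z s)))) (Icc 0 T) s)
    (hint : ∀ m < M, IntervalIntegrable (fun s => ⟪z s, Um' m s - f (Um m s) s⟫_ℝ) volume
      (t m) (t (m + 1))) :
    ⟪z T, U T - u T⟫_ℝ = ⟪z 0, U 0 - u 0⟫_ℝ + ∑ m ∈ range M,
      (⟪z (t m), Um m (t m) - U (t m)⟫_ℝ
        + ∫ s in t m..t (m + 1), ⟪z s, Um' m s - f (U s) s⟫_ℝ) := by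
  have hstep : ∀ m < M, ⟪z (t (m + 1)), U (t (m + 1)) - u (t (m + 1))⟫_ℝ
      - ⟪z (t m), U (t m) - u (t m)⟫_ℝ = ⟪z (t m), Um m (t m) - U (t m)⟫_ℝ
        + ∫ s in t m..t (m + 1), ⟪z s, Um' m s - f (U s) s⟫_ℝ := by
    intro m hm
    have hab := htlt m hm
    have hsub : Icc (t m) (t (m + 1)) ⊆ Icc 0 T :=
      ht0 ▸ htM ▸ Icc_subset_Icc_of_forall_lt_succ htlt hm
    have hIoo : Ioo (t m) (t (m + 1)) ⊆ Ioo 0 T :=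
      Ioo_subset_Ioo (hsub (left_mem_Icc.mpr hab.le)).1 (hsub (right_mem_Icc.mpr hab.le)).2
    have hnhds : ∀ s ∈ Ioo (t m) (t (m + 1)), Icc 0 T ∈ nhds s :=
      fun s hs => Icc_mem_nhds (hIoo hs).1 (hIoo hs).2
    have hUU : EqOn (Um m) U (Ioo (t m) (t (m + 1))) :=
      fun s hs => hUpw m hm s (Ioo_subset_Ioc_self hs)
    have hrep := inner_dual_sub_eq_integral_residual (u := u) hab.le (hz.mono hsub)
      (fun s hs => (hu s (hsub hs)).continuousWithinAt.mono hsub)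
      (fun s hs => (hUm m hm s hs).continuousWithinAt)
      (fun s hs => (hdual s (Ioo_subset_Ico_self (hIoo hs))).hasDerivAt (hnhds s hs))
      (fun s hs => hode s (Ioo_subset_Ioc_self (hIoo hs)) ▸
        (hu s (Ioo_subset_Icc_self (hIoo hs))).hasDerivAt (hnhds s hs))
      (fun s hs => (hUm m hm s (Ioo_subset_Icc_self hs)).hasDerivAt (Icc_mem_nhds hs.1 hs.2))
      (fun s hs => hUU hs ▸ hAavg s (Ioo_subset_Icc_self (hIoo hs))) (hint m hm)
    rw [hUpw m hm _ ⟨hab, le_rfl⟩, intervalIntegral.integral_congr_Ioo_of_le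
      (g := fun s => ⟪z s, Um' m s - f (U s) s⟫_ℝ) hab.le fun s hs => by simp only [hUU hs]]
      at hrep
    rw [← hrep]
    simp only [inner_sub_right]
    ring
  rw [← sum_congr rfl fun m hm => hstep m (mem_range.mp hm), sum_range_sub
    (fun m => ⟪z (t m), U (t m) - u (t m)⟫_ℝ), ht0, htM]
  ring

/-- **A posteriori error estimate (Theorem 2).**
The error decomposes as `⟨z_T, U(T) − u(T)⟩ = E_D + E_G + E_C`, with
`|E_D| ≤ ‖z(0)‖ ‖U(0) − u(0)‖`,
`|E_G| ≤ C_p · max_m { Δt_m^{p+1} (‖[U]_{m−1}‖/Δt_m + sup ‖R‖) } · ∫₀ᵀ ‖z^{(p+1)}‖ dt`, and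
`|E_C| ≤ C_p' · max_{k,m} ‖Δt_m⁻¹ R̄_k^m‖ · ∫₀ᵀ ‖πz‖ dt`,
where `C_p, C_p'` depend only on `p` and the interpolation nodes. -/
theorem error_estimate (p : ℕ) (τ : Fin (p + 1) → ℝ)
    (hτ : StrictMono τ) (hτ0 : 0 ≤ τ 0) (hτ1 : τ (Fin.last p) ≤ 1) :
    ∃ Cp Cp' : ℝ,
      ∀ (N M : ℕ) (hM : 0 < M) (T : ℝ) (_hT : 0 < T)
        (t : ℕ → ℝ) (_ht0 : t 0 = 0) (_htM : t M = T)
        (_htlt : ∀ m < M, t m < t (m + 1))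
        (u U z u' : ℝ → EuclideanSpace ℝ (Fin N))
        (Um Um' : ℕ → ℝ → EuclideanSpace ℝ (Fin N))
        (f : EuclideanSpace ℝ (Fin N) → ℝ → EuclideanSpace ℝ (Fin N))
        (A : ℝ → Matrix (Fin N) (Fin N) ℝ)
        (zT : EuclideanSpace ℝ (Fin N))
        -- f is continuous
        (_hf : Continuous fun q : EuclideanSpace ℝ (Fin N) × ℝ => f q.1 q.2)
        -- Ā is continuous and satisfies the averaged-Jacobian property
        (_hA : ContinuousOn A (Set.Icc 0 T))
        (_hAavg : ∀ s ∈ Set.Icc 0 T, (A s).mulVec (U s - u s) = f (U s) s - f (u s) s)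
        -- u is a continuously differentiable solution of the ODE
        (_hu : ∀ s ∈ Set.Icc 0 T, HasDerivWithinAt u (u' s) (Set.Icc 0 T) s)
        (_hu'c : ContinuousOn u' (Set.Icc 0 T))
        (_hode : ∀ s ∈ Set.Ioc 0 T, u' s = f (u s) s)
        -- U is piecewise smooth: on `(t m, t (m+1)]` it agrees with the C¹ function `Um m`
        (_hUpw : ∀ m < M, ∀ s ∈ Set.Ioc (t m) (t (m + 1)), Um m s = U s)
        (_hUm : ∀ m < M, ∀ s ∈ Set.Icc (t m) (t (m + 1)),
          HasDerivWithinAt (Um m) (Um' m s) (Set.Icc (t m) (t (m + 1))) s)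
        (_hUm'c : ∀ m < M, ContinuousOn (Um' m) (Set.Icc (t m) (t (m + 1))))
        -- z is (p+2)-times continuously differentiable and solves the dual problem
        (_hzreg : ContDiffOn ℝ (p + 2 : ℕ) z (Set.Icc 0 T))
        (_hdual : ∀ s ∈ Set.Ico 0 T,
          HasDerivWithinAt z (WithLp.toLp 2 (-(Matrix.mulVec (A s)ᵀ (z s)))) (Set.Icc 0 T) s)
        (_hzT : z T = zT),
        -- the error decomposition and the three bounds
        let Δt : ℕ → ℝ := fun m => t (m + 1) - t m
        let jU : ℕ → EuclideanSpace ℝ (Fin N) := fun m => Um m (t m) - U (t m)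
        let R : ℕ → ℝ → EuclideanSpace ℝ (Fin N) := fun m s => Um' m s - f (U s) s
        let Pz : ℕ → ℝ → EuclideanSpace ℝ (Fin N) :=
          fun m s => interpOn p τ z (t m) (t (m + 1)) s
        let Rbar : ℕ → Fin (p + 1) → EuclideanSpace ℝ (Fin N) := fun m k =>
          lagB p τ k 0 • jU m
            + ∫ s in t m..t (m + 1), lagB p τ k ((s - t m) / Δt m) • R m s
        let ED : ℝ := ⟪z 0, U 0 - u 0⟫_ℝ
        let EG : ℝ := ∑ m ∈ Finset.range M,
          (⟪z (t m) - Pz m (t m), jU m⟫_ℝ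
            + ∫ s in t m..t (m + 1), ⟪z s - Pz m s, R m s⟫_ℝ)
        let EC : ℝ := ∑ m ∈ Finset.range M,
          (⟪Pz m (t m), jU m⟫_ℝ
            + ∫ s in t m..t (m + 1), ⟪Pz m s, R m s⟫_ℝ)
        (⟪zT, U T - u T⟫_ℝ = ED + EG + EC)
        ∧ |ED| ≤ ‖z 0‖ * ‖U 0 - u 0‖
        ∧ |EG| ≤ Cp
            * ((Finset.range M).sup' (Finset.nonempty_range_iff.mpr hM.ne')
                fun m => Δt m ^ (p + 1)
                  * (‖jU m‖ / Δt m + ⨆ s ∈ Set.Ioo (t m) (t (m + 1)), ‖R m s‖))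
            * ∫ s in (0:ℝ)..T, ‖iteratedDerivWithin (p + 1) z (Set.Icc 0 T) s‖
        ∧ |EC| ≤ Cp'
            * ((Finset.range M).sup' (Finset.nonempty_range_iff.mpr hM.ne')
                fun m => Finset.univ.sup' Finset.univ_nonempty
                  fun k : Fin (p + 1) => ‖Rbar m k‖ / Δt m)
            * ∑ m ∈ Finset.range M, ∫ s in t m..t (m + 1), ‖Pz m s‖ := by
  obtain ⟨Λ, hΛ0, hΛ⟩ := exists_sum_abs_lagB_le p τ
  obtain ⟨K, hK0, hK⟩ := exists_norm_le_mul_lagL1Norm hτ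
  refine ⟨(1 + Λ) / p !, (p + 1) * K, ?_⟩
  intro N M hM T hT t ht0 htM htlt u U z u' Um Um' f A zT hf _ hAavg hu _ hode hUpw hUm hUm'c
    hzreg hdual hzT Δt jU R Pz Rbar ED EG EC
  have hsub : ∀ m < M, Icc (t m) (t (m + 1)) ⊆ Icc 0 T := fun m hm =>
    ht0 ▸ htM ▸ Icc_subset_Icc_of_forall_lt_succ htlt hm
  have hz : ContinuousOn z (Icc 0 T) := hzreg.continuousOn
  have hF : ∀ m < M, ContinuousOn (fun s => Um' m s - f (Um m s) s) (Icc (t m) (t (m + 1))) :=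
    fun m hm => continuousOn_residual hf (fun s hs => (hUm m hm s hs).continuousWithinAt)
      (hUm'c m hm)
  have hRF : ∀ m < M, EqOn (R m) (fun s => Um' m s - f (Um m s) s) (Ioo (t m) (t (m + 1))) :=
    fun m hm s hs => by simp only [R, hUpw m hm s (Ioo_subset_Ioc_self hs)]
  have hint : ∀ m < M, ∀ g, ContinuousOn g (Icc (t m) (t (m + 1))) →
      IntervalIntegrable (fun s => ⟪g s, R m s⟫_ℝ) volume (t m) (t (m + 1)) := fun m hm g hg =>
    intervalIntegrable_inner_of_eqOn_Ioo (htlt m hm).le hg (hF m hm) (hRF m hm)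
  have hI : ∀ g : ℕ → ℝ → EuclideanSpace ℝ (Fin N), ∀ m ∈ range M,
      0 ≤ ∫ s in t m..t (m + 1), ‖g m s‖ := fun g m hm =>
    intervalIntegral.integral_nonneg (htlt m (mem_range.mp hm)).le fun _ _ => norm_nonneg _
  refine ⟨?_, abs_real_inner_le_norm _ _, ?_, ?_⟩
  · rw [← hzT, inner_error_eq_sum ht0 htM htlt hAavg hu hode hUpw hUm hz hdual fun m hm =>
      ((hz.mono (hsub m hm)).inner (hF m hm)).intervalIntegrable_of_Icc (htlt m hm).le]
    rw [add_assoc]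
    simp only [EG, EC, ← sum_add_distrib]
    congr 1
    refine sum_congr rfl fun m hm => ?_
    have hm := mem_range.mp hm
    exact inner_add_integral_inner_eq_add (g := z) (h := Pz m) (R := R m) (jU m)
      (hint m hm _ ((hz.mono (hsub m hm)).sub (continuous_interpOn _ _ _).continuousOn))
      (hint m hm _ (continuous_interpOn _ _ _).continuousOn)
  · have hD : ContinuousOn (fun s => ‖iteratedDerivWithin (p + 1) z (Icc 0 T) s‖) (Icc 0 T) :=
      (hzreg.continuousOn_iteratedDerivWithin (by norm_cast; omega) (uniqueDiffOn_Icc hT)).norm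
    have hsum := intervalIntegral.sum_integral_adjacent_intervals (μ := volume) fun m hm =>
      (hD.mono (hsub m hm)).intervalIntegrable_of_Icc (htlt m hm).le
    rw [ht0, htM] at hsum
    rw [← hsum]
    refine abs_sum_le_mul_sup'_mul_sum _ (by positivity)
      (hI fun _ => iteratedDerivWithin (p + 1) z (Icc 0 T)) fun m hm => ?_
    have hm := mem_range.mp hm
    exact abs_inner_sub_interpOn_add_integral_le hτ hτ0 hτ1 hΛ
      (hzreg.of_le (by norm_cast; omega)) (hsub m hm (left_mem_Icc.mpr (htlt m hm).le)).1
      (htlt m hm) (hsub m hm (right_mem_Icc.mpr (htlt m hm).le)).2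
      (fun s hs => norm_le_biSup_Ioo_of_eqOn (hF m hm) (hRF m hm) hs) (jU m)
  · refine abs_sum_le_mul_sup'_mul_sum _ (by positivity) (hI Pz) fun m hm => ?_
    have hm := mem_range.mp hm
    exact abs_inner_interpOn_add_integral_le hK0 hK (htlt m hm)
      ((hF m hm).intervalIntegrable_of_eqOn_Ioo (htlt m hm).le (hRF m hm)) (jU m)
      fun k => le_sup' (fun k => ‖Rbar m k‖ / Δt m) (mem_univ k)
end

section
/- Corollary 1 (machine-precision bound on the computational error). Fix p ≥ 0 and nodes 0 ≤ τ₀ < ⋯ < τ_p ≤ 1. There exists a constant C_p′, depending only on p and the nodes, with the following property. Let 0 = t₀ < ⋯ < t_M = T be a partition with Δt_m = t_m − t_{m−1}, let z : [0,T] → ℝ^N be continuous, let ε > 0, and suppose the vectors R̄_k^m ∈ ℝ^N satisfy |(R̄_k^m)_i| ≤ ε for every component i = 1,…,N and all k, m. Then |Σ_{m=1}^{M} Σ_{k=0}^{p} ⟨z(t_{m−1} + τ_k Δt_m), R̄_k^m⟩| ≤ C_p′ · (ε√N / min_{1≤m≤M} Δt_m) · ∫₀ᵀ ‖(πz)(t)‖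 dt. -/
open MeasureTheory
open scoped InnerProductSpace

set_option maxHeartbeats 1000000

lemma lagB_continuous (p : ℕ) (τ : Fin (p + 1) → ℝ) (k : Fin (p + 1)) :
    Continuous (lagB p τ k) := by
  unfold lagB
  exact continuous_finset_prod _ fun j _ => (continuous_id.sub continuous_const).div_const _

lemma lagB_delta (p : ℕ) (τ : Fin (p + 1) → ℝ) (hτ : StrictMono τ) (k j : Fin (p + 1)) :
    lagB p τ k (τ j) = if j = k then 1 else 0 := by
  unfold lagB
  by_cases h : j = k
  · rw [if_pos h, h]
    refine Finset.prod_eq_one fun i hi => div_self ?_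
    exact sub_ne_zero.mpr fun he => (Finset.mem_erase.mp hi).1 (hτ.injective he.symm)
  · rw [if_neg h]
    refine Finset.prod_eq_zero (Finset.mem_erase.mpr ⟨h, Finset.mem_univ j⟩) ?_
    simp

lemma scalar_bound (p : ℕ) (τ : Fin (p + 1) → ℝ) (hτ : StrictMono τ)
    (hτ0 : 0 ≤ τ 0) (hτ1 : τ (Fin.last p) ≤ 1) :
    ∃ C : ℝ, 0 ≤ C ∧ ∀ c : Fin (p + 1) → ℝ, ∀ k,
      |c k| ≤ C * ∫ x in (0:ℝ)..1, |∑ j, c j * lagB p τ j x| := by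
  set Φ : (Fin (p + 1) → ℝ) → ℝ :=
    fun c => ∫ x in (0:ℝ)..1, |∑ j, c j * lagB p τ j x| with hΦ
  have contP : ∀ c : Fin (p + 1) → ℝ, Continuous fun x => ∑ j, c j * lagB p τ j x :=
    fun c => continuous_finset_sum _ fun j _ => continuous_const.mul (lagB_continuous p τ j)
  have intg : ∀ c : Fin (p + 1) → ℝ,
      IntervalIntegrable (fun x => |∑ j, c j * lagB p τ j x|) volume 0 1 :=
    fun c => ((contP c).abs).intervalIntegrable 0 1
  have Φnonneg : ∀ c, 0 ≤ Φ c := fun c =>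
    intervalIntegral.integral_nonneg zero_le_one fun x _ => abs_nonneg _
  have Φadd : ∀ c d : Fin (p + 1) → ℝ, Φ (c + d) ≤ Φ c + Φ d := by
    intro c d
    rw [hΦ]
    have : (∫ x in (0:ℝ)..1, (|∑ j, c j * lagB p τ j x| + |∑ j, d j * lagB p τ j x|))
        = Φ c + Φ d := intervalIntegral.integral_add (intg c) (intg d)
    rw [← this]
    refine intervalIntegral.integral_mono_on zero_le_one (intg _) ((intg c).add (intg d))
      fun x _ => ?_
    simp only [Pi.add_apply, add_mul, Finset.sum_add_distrib]
    exact abs_add_le _ _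
  have Φsmul : ∀ (a : ℝ) (c : Fin (p + 1) → ℝ), Φ (a • c) = |a| * Φ c := by
    intro a c
    rw [hΦ]
    simp only [Pi.smul_apply, smul_eq_mul, mul_assoc, ← Finset.mul_sum, abs_mul]
    exact intervalIntegral.integral_const_mul _ _
  have Φcont : Continuous Φ := by
    set K : ℝ := ∑ j, ∫ x in (0:ℝ)..1, |lagB p τ j x| with hK
    have hK0 : 0 ≤ K := Finset.sum_nonneg fun j _ =>
      intervalIntegral.integral_nonneg zero_le_one fun x _ => abs_nonneg _
    have hΦle : ∀ e : Fin (p + 1) → ℝ, Φ e ≤ ‖e‖ * K := by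
      intro e
      have h1 : Φ e ≤ ∫ x in (0:ℝ)..1, ∑ j, ‖e‖ * |lagB p τ j x| := by
        refine intervalIntegral.integral_mono_on zero_le_one (intg e)
          (ContinuousOn.intervalIntegrable (Continuous.continuousOn (by
            exact continuous_finset_sum _ fun j _ =>
              continuous_const.mul (lagB_continuous p τ j).abs))) fun x _ => ?_
        refine (Finset.abs_sum_le_sum_abs _ _).trans (Finset.sum_le_sum fun j _ => ?_)
        rw [abs_mul]
        have hej : |e j| ≤ ‖e‖ := by simpa using norm_le_pi_norm e j
        exact mul_le_mul_of_nonneg_right hej (abs_nonneg _)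
      calc Φ e ≤ _ := h1
        _ = ∑ j, ∫ x in (0:ℝ)..1, ‖e‖ * |lagB p τ j x| :=
          intervalIntegral.integral_finset_sum fun j _ =>
            (continuous_const.mul (lagB_continuous p τ j).abs).intervalIntegrable 0 1
        _ = ‖e‖ * K := by
          rw [hK, Finset.mul_sum]
          exact Finset.sum_congr rfl fun j _ => intervalIntegral.integral_const_mul _ _
    have hlip : LipschitzWith K.toNNReal Φ := by
      refine LipschitzWith.of_dist_le_mul fun c d => ?_
      rw [Real.dist_eq, dist_eq_norm, Real.coe_toNNReal K hK0]
      have h1 : Φ c - Φ d ≤ ‖c - d‖ * K := by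
        have := Φadd (c - d) d
        rw [sub_add_cancel] at this
        nlinarith [hΦle (c - d)]
      have h2 : Φ d - Φ c ≤ ‖c - d‖ * K := by
        have := Φadd (d - c) c
        rw [sub_add_cancel] at this
        have : Φ d - Φ c ≤ Φ (d - c) := by linarith
        refine this.trans ?_
        rw [← norm_neg, neg_sub]
        exact hΦle (d - c)
      rw [abs_sub_le_iff]
      constructor <;> nlinarith
    exact hlip.continuous
  -- minimum on the sphere
  have hsne : (Metric.sphere (0 : Fin (p + 1) → ℝ) 1).Nonempty :=
    NormedSpace.sphere_nonempty.mpr zero_le_one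
  obtain ⟨c₀, hc₀S, hmin'⟩ :=
    (isCompact_sphere (0 : Fin (p + 1) → ℝ) 1).exists_isMinOn hsne Φcont.continuousOn
  have hmin : ∀ x ∈ Metric.sphere (0 : Fin (p + 1) → ℝ) 1, Φ c₀ ≤ Φ x :=
    fun x hx => hmin' hx
  have hc₀ : ‖c₀‖ = 1 := by simpa using mem_sphere_zero_iff_norm.mp hc₀S
  have hρ : 0 < Φ c₀ := by
    rcases lt_or_eq_of_le (Φnonneg c₀) with h | h
    · exact h
    exfalso
    have h0 : (∫ x in (0:ℝ)..1, |∑ j, c₀ j * lagB p τ j x|) = 0 := h.symm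
    have hae : (fun x => |∑ j, c₀ j * lagB p τ j x|) =ᵐ[volume.restrict (Set.Ioc (0:ℝ) 1)] 0 :=
      (intervalIntegral.integral_eq_zero_iff_of_le_of_nonneg_ae zero_le_one
        (Filter.Eventually.of_forall fun x => abs_nonneg _) (intg c₀)).mp h0
    have hae' : (fun x => |∑ j, c₀ j * lagB p τ j x|) =ᵐ[volume.restrict (Set.Icc (0:ℝ) 1)] 0 := by
      rwa [Measure.restrict_congr_set Ioc_ae_eq_Icc] at hae
    have heq : Set.EqOn (fun x => |∑ j, c₀ j * lagB p τ j x|) 0 (Set.Icc (0:ℝ) 1) :=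
      Measure.eqOn_Icc_of_ae_eq volume (zero_ne_one) hae' ((contP c₀).abs.continuousOn)
        continuousOn_const
    have hck : ∀ k, c₀ k = 0 := by
      intro k
      have hτk : τ k ∈ Set.Icc (0:ℝ) 1 :=
        ⟨hτ0.trans (hτ.monotone (Fin.zero_le k)), (hτ.monotone (Fin.le_last k)).trans hτ1⟩
      have := heq hτk
      simp only [Pi.zero_apply, abs_eq_zero] at this
      have hsum : (∑ j, c₀ j * lagB p τ j (τ k)) = c₀ k := by
        rw [Finset.sum_eq_single k]
        · rw [lagB_delta p τ hτ k k, if_pos rfl, mul_one]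
        · intro j _ hj
          rw [lagB_delta p τ hτ j k, if_neg (Ne.symm ?_), mul_zero]
          exact hj
        · intro h; exact absurd (Finset.mem_univ k) h
      rwa [hsum] at this
    have : c₀ = 0 := funext hck
    rw [this, norm_zero] at hc₀
    exact zero_ne_one hc₀
  refine ⟨(Φ c₀)⁻¹, le_of_lt (inv_pos.mpr hρ), fun c k => ?_⟩
  have key : Φ c₀ * ‖c‖ ≤ Φ c := by
    rcases eq_or_ne c 0 with rfl | hc
    · simp only [norm_zero, mul_zero]; exact Φnonneg 0
    · have hcn : 0 < ‖c‖ := norm_pos_iff.mpr hc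
      have hu : (‖c‖⁻¹ • c) ∈ Metric.sphere (0 : Fin (p + 1) → ℝ) 1 := by
        rw [mem_sphere_zero_iff_norm, norm_smul, norm_inv, norm_norm,
          inv_mul_cancel₀ hcn.ne']
      have := hmin _ hu
      rw [Φsmul, abs_inv, abs_norm] at this
      calc Φ c₀ * ‖c‖ ≤ (‖c‖⁻¹ * Φ c) * ‖c‖ := by gcongr
        _ = Φ c := by field_simp
  have hk : |c k| ≤ ‖c‖ := by
    have := norm_le_pi_norm c k
    simpa using this
  calc |c k| ≤ ‖c‖ := hk
    _ = (Φ c₀)⁻¹ * (Φ c₀ * ‖c‖) := by field_simp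
    _ ≤ (Φ c₀)⁻¹ * Φ c := by gcongr

lemma vec_bound (p : ℕ) (τ : Fin (p + 1) → ℝ) (hτ : StrictMono τ)
    (hτ0 : 0 ≤ τ 0) (hτ1 : τ (Fin.last p) ≤ 1) :
    ∃ C : ℝ, 0 ≤ C ∧ ∀ (N : ℕ) (v : Fin (p + 1) → EuclideanSpace ℝ (Fin N)),
      ∀ k, ‖v k‖ ≤ C * ∫ x in (0:ℝ)..1, ‖∑ j, lagB p τ j x • v j‖ := by
  obtain ⟨C, hC0, hC⟩ := scalar_bound p τ hτ hτ0 hτ1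
  refine ⟨C, hC0, fun N v k => ?_⟩
  have contS : Continuous fun x => ∑ j, lagB p τ j x • v j :=
    continuous_finset_sum _ fun j _ => (lagB_continuous p τ j).smul continuous_const
  have hI0 : 0 ≤ ∫ x in (0:ℝ)..1, ‖∑ j, lagB p τ j x • v j‖ :=
    intervalIntegral.integral_nonneg zero_le_one fun x _ => norm_nonneg _
  rcases eq_or_ne (v k) 0 with hv | hv
  · rw [hv, norm_zero]; positivity
  · set u : EuclideanSpace ℝ (Fin N) := ‖v k‖⁻¹ • v k with hu
    have hvk : 0 < ‖v k‖ := norm_pos_iff.mpr hv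
    have hun : ‖u‖ = 1 := by
      rw [hu, norm_smul, norm_inv, norm_norm, inv_mul_cancel₀ hvk.ne']
    set c : Fin (p + 1) → ℝ := fun j => ⟪v j, u⟫_ℝ with hc'
    have hck : c k = ‖v k‖ := by
      show ⟪v k, ‖v k‖⁻¹ • v k⟫_ℝ = ‖v k‖
      rw [real_inner_smul_right, real_inner_self_eq_norm_sq]
      field_simp
    have h1 := hC c k
    rw [hck, abs_of_nonneg hvk.le] at h1
    refine h1.trans ?_
    gcongr
    refine intervalIntegral.integral_mono_on zero_le_one ?_ (contS.norm.intervalIntegrable 0 1)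
      fun x _ => ?_
    · refine Continuous.intervalIntegrable ?_ 0 1
      exact (continuous_finset_sum _ fun j _ =>
        continuous_const.mul (lagB_continuous p τ j)).abs
    · have hsum : (∑ j, c j * lagB p τ j x) = ⟪∑ j, lagB p τ j x • v j, u⟫_ℝ := by
        rw [sum_inner]
        refine Finset.sum_congr rfl fun j _ => ?_
        rw [real_inner_smul_left]
        ring
      rw [hsum]
      calc |⟪∑ j, lagB p τ j x • v j, u⟫_ℝ| ≤ ‖∑ j, lagB p τ j x • v j‖ * ‖u‖ :=
            abs_real_inner_le_norm _ _
        _ = ‖∑ j, lagB p τ j x • v j‖ := by rw [hun, mul_one]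

/-- **Corollary 1 (machine-precision bound on the computational error).**
If every component of every discrete residual `R̄_k^m` is at most `ε` in absolute value,
then `|Σ_m Σ_k ⟨z(t_{m−1} + τ_k Δt_m), R̄_k^m⟩| ≤ C_p' · (ε√N / min_m Δt_m) · ∫₀ᵀ ‖πz‖ dt`,
where `C_p'` depends only on `p` and the nodes. -/

theorem machine_precision_bound (p : ℕ) (τ : Fin (p + 1) → ℝ)
    (hτ : StrictMono τ) (hτ0 : 0 ≤ τ 0) (hτ1 : τ (Fin.last p) ≤ 1) :
    ∃ Cp' : ℝ,
      ∀ (N M : ℕ) (hM : 0 < M) (T : ℝ)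
        (t : ℕ → ℝ) (_ht0 : t 0 = 0) (_htM : t M = T)
        (_htlt : ∀ m < M, t m < t (m + 1))
        (z : ℝ → EuclideanSpace ℝ (Fin N)) (_hz : ContinuousOn z (Set.Icc 0 T))
        (ε : ℝ) (_hε : 0 < ε)
        (Rbar : ℕ → Fin (p + 1) → EuclideanSpace ℝ (Fin N))
        (_hRbar : ∀ m < M, ∀ (k : Fin (p + 1)) (i : Fin N), |Rbar m k i| ≤ ε),
        |∑ m ∈ Finset.range M, ∑ k, ⟪z (t m + τ k * (t (m + 1) - t m)), Rbar m k⟫_ℝ|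
          ≤ Cp'
            * (ε * Real.sqrt N
                / (Finset.range M).inf' (Finset.nonempty_range_iff.mpr hM.ne')
                    fun m => t (m + 1) - t m)
            * ∑ m ∈ Finset.range M,
                ∫ s in t m..t (m + 1), ‖interpOn p τ z (t m) (t (m + 1)) s‖ := by
  obtain ⟨C, hC0, hC⟩ := vec_bound p τ hτ hτ0 hτ1
  refine ⟨(p + 1 : ℝ) * C, ?_⟩
  intro N M hM T t ht0 htM htlt z hz ε hε Rbar hRbar
  set δ : ℝ := (Finset.range M).inf' (Finset.nonempty_range_iff.mpr hM.ne')
      (fun m => t (m + 1) - t m) with hδ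
  have hδpos : 0 < δ := by
    rw [hδ, Finset.lt_inf'_iff]
    exact fun m hm => sub_pos.mpr (htlt m (Finset.mem_range.mp hm))
  have hδle : ∀ m ∈ Finset.range M, δ ≤ t (m + 1) - t m := fun m hm =>
    Finset.inf'_le _ hm
  set sN : ℝ := ε * Real.sqrt N with hsN
  have hsN0 : 0 ≤ sN := by positivity
  set A : ℝ := (p + 1 : ℝ) * C * sN with hA
  have hA0 : 0 ≤ A := by positivity
  -- per interval bound
  have key : ∀ m ∈ Finset.range M,
      |∑ k, ⟪z (t m + τ k * (t (m + 1) - t m)), Rbar m k⟫_ℝ|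
        ≤ A / δ * ∫ s in t m..t (m + 1), ‖interpOn p τ z (t m) (t (m + 1)) s‖ := by
    intro m hm
    have hmM : m < M := Finset.mem_range.mp hm
    set a := t m with ha
    set b := t (m + 1) with hb
    have hab : a < b := htlt m hmM
    have hba : b - a ≠ 0 := sub_ne_zero.mpr hab.ne'
    set v : Fin (p + 1) → EuclideanSpace ℝ (Fin N) :=
      fun k => z (a + τ k * (b - a)) with hv
    set I : ℝ := ∫ x in (0:ℝ)..1, ‖∑ j, lagB p τ j x • v j‖ with hI
    have hI0 : 0 ≤ I :=
      intervalIntegral.integral_nonneg zero_le_one fun x _ => norm_nonneg _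
    -- residual norm bound
    have hR : ∀ k, ‖Rbar m k‖ ≤ sN := by
      intro k
      rw [EuclideanSpace.norm_eq]
      have h1 : (∑ i, ‖Rbar m k i‖ ^ 2) ≤ (N : ℝ) * ε ^ 2 := by
        calc (∑ i, ‖Rbar m k i‖ ^ 2) ≤ ∑ _i : Fin N, ε ^ 2 :=
              Finset.sum_le_sum fun i _ => by
                have := hRbar m hmM k i
                rw [Real.norm_eq_abs]
                nlinarith [abs_nonneg (Rbar m k i)]
          _ = (N : ℝ) * ε ^ 2 := by
              rw [Finset.sum_const, Finset.card_univ, Fintype.card_fin, nsmul_eq_mul]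
      calc Real.sqrt (∑ i, ‖Rbar m k i‖ ^ 2) ≤ Real.sqrt ((N : ℝ) * ε ^ 2) :=
            Real.sqrt_le_sqrt h1
        _ = sN := by
            rw [hsN, Real.sqrt_mul (Nat.cast_nonneg N), Real.sqrt_sq hε.le, mul_comm]
    -- step 1
    have step1 : |∑ k, ⟪z (a + τ k * (b - a)), Rbar m k⟫_ℝ| ≤ (∑ k, ‖v k‖) * sN := by
      calc |∑ k, ⟪z (a + τ k * (b - a)), Rbar m k⟫_ℝ|
          ≤ ∑ k, |⟪z (a + τ k * (b - a)), Rbar m k⟫_ℝ| := Finset.abs_sum_le_sum_abs _ _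
        _ ≤ ∑ k, ‖v k‖ * sN := Finset.sum_le_sum fun k _ => by
            calc |⟪z (a + τ k * (b - a)), Rbar m k⟫_ℝ|
                ≤ ‖v k‖ * ‖Rbar m k‖ := abs_real_inner_le_norm _ _
              _ ≤ ‖v k‖ * sN := by
                  exact mul_le_mul_of_nonneg_left (hR k) (norm_nonneg _)
        _ = (∑ k, ‖v k‖) * sN := (Finset.sum_mul _ _ _).symm
    -- step 2
    have step2 : (∑ k, ‖v k‖) ≤ (p + 1 : ℝ) * (C * I) := by
      calc (∑ k, ‖v k‖) ≤ ∑ _k : Fin (p + 1), C * I :=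
            Finset.sum_le_sum fun k _ => hC N v k
        _ = (p + 1 : ℝ) * (C * I) := by
            rw [Finset.sum_const, Finset.card_univ, Fintype.card_fin, nsmul_eq_mul]
            norm_num
    -- step 3 : change of variables
    have step3 : (∫ s in a..b, ‖interpOn p τ z a b s‖) = (b - a) * I := by
      have heq : ∀ s : ℝ, ‖interpOn p τ z a b s‖
          = (fun x => ‖∑ j, lagB p τ j x • v j‖) (s / (b - a) - a / (b - a)) := by
        intro s
        simp only [interpOn, hv, ← sub_div]
      calc (∫ s in a..b, ‖interpOn p τ z a b s‖)
          = ∫ s in a..b, (fun x => ‖∑ j, lagB p τ j x • v j‖) (s / (b - a) - a / (b - a)) := by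
            exact intervalIntegral.integral_congr fun s _ => heq s
        _ = (b - a) • ∫ x in (a / (b - a) - a / (b - a))..(b / (b - a) - a / (b - a)),
              ‖∑ j, lagB p τ j x • v j‖ :=
            intervalIntegral.integral_comp_div_sub (a := a) (b := b)
              (f := fun x => ‖∑ j, lagB p τ j x • v j‖) hba (a / (b - a))
        _ = (b - a) * I := by
            rw [sub_self, div_sub_div_same, div_self hba, smul_eq_mul, hI]
    have hδm : δ ≤ b - a := hδle m hm
    calc |∑ k, ⟪z (a + τ k * (b - a)), Rbar m k⟫_ℝ|
        ≤ (∑ k, ‖v k‖) * sN := step1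
      _ ≤ ((p + 1 : ℝ) * (C * I)) * sN := mul_le_mul_of_nonneg_right step2 hsN0
      _ = A * I := by rw [hA]; ring
      _ ≤ A * ((b - a) * I) / δ := by
          rw [le_div_iff₀ hδpos]
          nlinarith [mul_le_mul_of_nonneg_left hδm (mul_nonneg hA0 hI0)]
      _ = A / δ * ((b - a) * I) := by ring
      _ = A / δ * ∫ s in a..b, ‖interpOn p τ z a b s‖ := by rw [step3]
  calc |∑ m ∈ Finset.range M, ∑ k, ⟪z (t m + τ k * (t (m + 1) - t m)), Rbar m k⟫_ℝ|
      ≤ ∑ m ∈ Finset.range M,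
          |∑ k, ⟪z (t m + τ k * (t (m + 1) - t m)), Rbar m k⟫_ℝ| :=
        Finset.abs_sum_le_sum_abs _ _
    _ ≤ ∑ m ∈ Finset.range M,
          A / δ * ∫ s in t m..t (m + 1), ‖interpOn p τ z (t m) (t (m + 1)) s‖ :=
        Finset.sum_le_sum key
    _ = (p + 1 : ℝ) * C * (sN / δ)
          * ∑ m ∈ Finset.range M,
              ∫ s in t m..t (m + 1), ‖interpOn p τ z (t m) (t (m + 1)) s‖ := by
        rw [Finset.mul_sum, hA]
        exact Finset.sum_congr rfl fun m _ => by ring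
end
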